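/- arXiv:2102.12741 — 2 statements merged into one kernel-verified Lean document; each statement's English description precedes it below -/
import Mathlib

section
/- For the operator A = u∂_v − v∂_u acting on the space P_k of homogeneous polynomials of degree k in two real variables (u,v): if k is odd, then A is invertible on P_k. -/
/-!
`A = u ∂_v - v ∂_u` is a derivation. Writing `q_{a,b}` for the coefficient of `u^a v^b` in `Q`,
the coefficients of `A Q` at `u^{a+1} v^{b+1}` and at `v^{b+1}` are
`(b + 2) q_{a,b+2} - (a + 2) q_{a+2,b}` and `-q_{1,b}`. So if `A Q = 0`, induction on `a` kills
every `q_{a,b}` with `a` odd, and by the symmetry `u ↔ v` (which changes the sign of `A`) every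
`q_{a,b}` with `b` odd. In odd degree one of the two exponents is odd, so `A` is injective on
`P_k`, hence bijective since `P_k` is finite-dimensional.
-/

open MvPolynomial

/-- The operator `A = u ∂_v - v ∂_u` on polynomials in two variables. -/
noncomputable def Aop (Q : MvPolynomial (Fin 2) ℝ) : MvPolynomial (Fin 2) ℝ :=
  X 0 * pderiv 1 Q - X 1 * pderiv 0 Q

namespace MvPolynomial

open Finsupp

variable {σ R : Type*} [CommRing R]

noncomputable def rotationDerivation (i j : σ) :
    Derivation R (MvPolynomial σ R) (MvPolynomial σ R) :=
  (X i : MvPolynomial σ R) • pderiv j - (X j : MvPolynomial σ R) • pderiv i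

theorem rotationDerivation_apply (i j : σ) (Q : MvPolynomial σ R) :
    rotationDerivation i j Q = X i * pderiv j Q - X j * pderiv i Q :=
  rfl

theorem rotationDerivation_swap (i j : σ) :
    rotationDerivation (R := R) j i = -rotationDerivation i j :=
  (neg_sub _ _).symm

theorem IsHomogeneous.rotationDerivation {k : ℕ} {Q : MvPolynomial σ R}
    (hQ : Q.IsHomogeneous k) (i j : σ) : (rotationDerivation i j Q).IsHomogeneous k := by
  cases k with
  | zero =>
    rw [← totalDegree_zero_iff_isHomogeneous, totalDegree_eq_zero_iff_eq_C] at hQ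
    rw [hQ, rotationDerivation_apply, pderiv_C, pderiv_C, mul_zero, mul_zero, sub_zero]
    exact isHomogeneous_zero _ _ _
  | succ k =>
    have hterm (a b : σ) : (X a * pderiv b Q).IsHomogeneous (k + 1) := by
      simpa [add_comm] using (isHomogeneous_X R a).mul (hQ.pderiv (i := b))
    exact (hterm i j).sub (hterm j i)

theorem coeff_add_single_add_single_rotationDerivation (i j : σ) (p : σ →₀ ℕ)
    (Q : MvPolynomial σ R) :
    coeff (p + single i 1 + single j 1) (rotationDerivation i j Q) =
      coeff (p + single j 2) Q * (p j + 2) - coeff (p + single i 2) Q * (p i + 2) := by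
  rw [rotationDerivation_apply, coeff_sub, mul_comm (X i), mul_comm (X j), coeff_mul_X,
    add_right_comm, coeff_mul_X, coeff_pderiv, coeff_pderiv, add_assoc, add_assoc,
    ← single_add, ← single_add]
  simp only [Finsupp.coe_add, Pi.add_apply, single_eq_same, Nat.cast_add, Nat.cast_one]
  ring

variable {i j : σ}

theorem coeff_add_single_rotationDerivation_of_eq_zero (hij : i ≠ j) {p : σ →₀ ℕ}
    (hp : p i = 0) (Q : MvPolynomial σ R) :
    coeff (p + single j 1) (rotationDerivation i j Q) = -coeff (p + single i 1) Q := by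
  classical
  rw [rotationDerivation_apply, coeff_sub, coeff_X_mul', mul_comm (X j), coeff_mul_X]
  simp [hp, hij, coeff_pderiv]

theorem coeff_eq_zero_of_rotationDerivation_eq_zero [IsDomain R] [CharZero R] (hij : i ≠ j)
    {Q : MvPolynomial σ R} (hQ : rotationDerivation i j Q = 0) {m : σ →₀ ℕ} (hm : Odd (m i)) :
    coeff m Q = 0 := by
  obtain ⟨n, hn⟩ := hm
  induction n generalizing m with
  | zero =>
    have hle : single i 1 ≤ m := single_le_iff.mpr (by omega)
    have hp : (m - single i 1 : σ →₀ ℕ) i = 0 := by simp [hn]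
    have h := coeff_add_single_rotationDerivation_of_eq_zero hij hp Q
    rwa [hQ, coeff_zero, tsub_add_cancel_of_le hle, zero_eq_neg] at h
  | succ n ih =>
    have hle : single i 2 ≤ m := single_le_iff.mpr (by omega)
    set p := m - single i 2
    have hp : p i = 2 * n + 1 := by simp only [p, tsub_apply, hn, single_eq_same]; omega
    have h := coeff_add_single_add_single_rotationDerivation i j p Q
    rw [hQ, coeff_zero, ih (by simpa [hij] using hp), zero_mul,
      zero_sub, tsub_add_cancel_of_le hle, zero_eq_neg, mul_eq_zero] at h
    exact h.resolve_right (by rw [hp]; exact_mod_cast (2 * n + 2).succ_ne_zero)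

theorem eq_zero_of_rotationDerivation_eq_zero_of_odd [IsDomain R] [CharZero R] {k : ℕ}
    (hk : Odd k) {Q : MvPolynomial (Fin 2) R} (hQ : Q.IsHomogeneous k)
    (hDQ : rotationDerivation 0 1 Q = 0) : Q = 0 := by
  ext m
  rw [coeff_zero]
  by_cases hm : m.degree = k
  · rw [degree_eq_sum, Fin.sum_univ_two] at hm
    rcases Nat.even_or_odd (m 0) with h0 | h0
    · have h1 : Odd (m 1) := by grind
      have hDQ' : rotationDerivation 1 0 Q = 0 := by
        rw [rotationDerivation_swap, Derivation.neg_apply, hDQ, neg_zero]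
      exact coeff_eq_zero_of_rotationDerivation_eq_zero one_ne_zero hDQ' h1
    · exact coeff_eq_zero_of_rotationDerivation_eq_zero zero_ne_one hDQ h0
  · exact hQ.coeff_eq_zero hm

theorem bijective_rotationDerivation_restrict_homogeneousSubmodule {K : Type*} [Field K]
    [CharZero K] {k : ℕ} (hk : Odd k) :
    Function.Bijective ((rotationDerivation (R := K) 0 1).toLinearMap.restrict
      (p := homogeneousSubmodule (Fin 2) K k) (q := homogeneousSubmodule (Fin 2) K k)
      (fun _ hQ ↦ IsHomogeneous.rotationDerivation hQ 0 1)) := by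
  have : FiniteDimensional K (homogeneousSubmodule (Fin 2) K k) :=
    Module.Finite.iff_fg.mpr (homogeneousSubmodule_fg (Fin 2) K k)
  refine (and_iff_left_of_imp LinearMap.injective_iff_surjective.mp).mpr ?_
  rw [← LinearMap.ker_eq_bot, LinearMap.ker_eq_bot']
  exact fun ⟨Q, hQ⟩ hDQ ↦ Subtype.ext (eq_zero_of_rotationDerivation_eq_zero_of_odd hk hQ
    (congrArg Subtype.val hDQ))

end MvPolynomial

theorem Aop_eq_rotationDerivation (Q : MvPolynomial (Fin 2) ℝ) :
    Aop Q = rotationDerivation 0 1 Q :=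
  rfl

/-- If `k` is odd, then `A = u ∂_v - v ∂_u` is invertible on the space `P_k` of
homogeneous polynomials of degree `k`. -/
theorem Aop_bijective_on_homogeneous_of_odd (k : ℕ) (hk : Odd k) :
    (∀ Q : MvPolynomial (Fin 2) ℝ, Q.IsHomogeneous k → (Aop Q).IsHomogeneous k) ∧
    (∀ R : MvPolynomial (Fin 2) ℝ, R.IsHomogeneous k →
      ∃! Q : MvPolynomial (Fin 2) ℝ, Q.IsHomogeneous k ∧ Aop Q = R) := by
  simp only [Aop_eq_rotationDerivation]
  refine ⟨fun Q hQ ↦ hQ.rotationDerivation 0 1, fun R hR ↦ ?_⟩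
  obtain ⟨⟨Q, hQ⟩, hDQ, huniq⟩ :=
    (bijective_rotationDerivation_restrict_homogeneousSubmodule (K := ℝ) hk).existsUnique ⟨R, hR⟩
  exact ⟨Q, ⟨hQ, congrArg Subtype.val hDQ⟩,
    fun Q' ⟨hQ', hDQ'⟩ ↦ congrArg Subtype.val (huniq ⟨Q', hQ'⟩ (Subtype.ext hDQ'))⟩
end

section
/- Let J : [0,∞) → (0,∞) be differentiable with |J'(t)| ≤ C J(t)^{2N+1} whenever J(t) ≤ 1, for constants C > 0 and integer N ≥ 1. Set C_N = (2^{2N} − 1)/(2^{2N+1} N C). If J(0) ≤ 1/2 and 0 ≤ t ≤ C_N / J(0)^{2N}, then J(t) ≤ 2 J(0) and |J(t) − J(0)| ≤ 2^{2N+1} C J(0)^{2N+1} t. -/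
/-!
Since `|J'| ≤ C J^{2N+1}` where `J ≤ 1`, the first integral `J^{-2N}` changes at rate at most
`2NC` as long as `J ≤ 2 J(0) ≤ 1`. The constant `C_N` is chosen so that in time `C_N / J(0)^{2N}`
this rate cannot move `J^{-2N}` from `J(0)^{-2N}` down to `(2 J(0))^{-2N}`; a continuity
(bootstrap) argument therefore keeps `J ≤ 2 J(0)` on the whole interval, and the mean value
theorem with `|J'| ≤ C (2 J(0))^{2N+1}` gives the second estimate.
-/

open Set

theorem ContinuousOn.le_of_bootstrap {f : ℝ → ℝ} {a b M : ℝ} (hf : ContinuousOn f (Icc a b))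
    (ha : f a ≤ M) (hstep : ∀ x ∈ Ico a b, (∀ y ∈ Icc a x, f y ≤ M) → f x < M)
    {x : ℝ} (hx : x ∈ Icc a b) : f x ≤ M := by
  by_contra! hMx
  -- the first time in `[a, x]` at which `f` reaches `M`
  set T := Icc a x ∩ f ⁻¹' Ici M
  have hT : IsClosed T :=
    (hf.mono (Icc_subset_Icc_right hx.2)).preimage_isClosed_of_isClosed isClosed_Icc isClosed_Ici
  have hτ : sInf T ∈ T := hT.csInf_mem ⟨x, ⟨hx.1, le_rfl⟩, hMx.le⟩ ⟨a, fun y hy => hy.1.1⟩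
  have hbefore : ∀ y ∈ Ico a (sInf T), f y ≤ M := fun y hy => by
    by_contra! hy'
    have : sInf T ≤ y := csInf_le ⟨a, fun z hz => hz.1.1⟩ ⟨⟨hy.1, hy.2.le.trans hτ.1.2⟩, hy'.le⟩
    exact this.not_gt hy.2
  have hupto : ∀ y ∈ Icc a (sInf T), f y ≤ M := by
    rcases hτ.1.1.eq_or_lt with hτa | hτa
    · intro y hy
      obtain rfl : y = a := le_antisymm (hy.2.trans hτa.ge) hy.1
      exact ha
    · have hclosed : IsClosed (Icc a b ∩ f ⁻¹' Iic M) :=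
        hf.preimage_isClosed_of_isClosed isClosed_Icc isClosed_Iic
      rw [← closure_Ico hτa.ne]
      refine fun y hy => (closure_minimal (fun z hz => ?_) hclosed hy).2
      exact ⟨⟨hz.1, hz.2.le.trans (hτ.1.2.trans hx.2)⟩, hbefore z hz⟩
  rcases hτ.1.2.eq_or_lt with hτx | hτx
  · exact (hupto x ⟨hx.1, hτx.ge⟩).not_gt hMx
  · exact (hstep _ ⟨hτ.1.1, hτx.trans_le hx.2⟩ hupto).not_ge hτ.2

theorem abs_inv_pow_sub_inv_pow_le {J J' : ℝ → ℝ} {a b C : ℝ} (n : ℕ) (hab : a ≤ b)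
    (hpos : ∀ u ∈ Icc a b, 0 < J u)
    (hderiv : ∀ u ∈ Icc a b, HasDerivWithinAt J (J' u) (Icc a b) u)
    (hbound : ∀ u ∈ Icc a b, |J' u| ≤ C * J u ^ (n + 1)) :
    |(J b ^ n)⁻¹ - (J a ^ n)⁻¹| ≤ n * C * (b - a) := by
  have hderiv' : ∀ u ∈ Icc a b, HasDerivWithinAt (fun v => J v ^ (-n : ℤ))
      ((-n : ℤ) * J u ^ ((-n : ℤ) - 1) * J' u) (Icc a b) u := fun u hu =>
    (hasDerivAt_zpow _ _ (Or.inl (hpos u hu).ne')).comp_hasDerivWithinAt u (hderiv u hu)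
  have hbound' : ∀ u ∈ Ico a b, ‖(-n : ℤ) * J u ^ ((-n : ℤ) - 1) * J' u‖ ≤ n * C := by
    intro u hu
    have hJu := hpos u (Ico_subset_Icc_self hu)
    have hcancel : J u ^ ((-n : ℤ) - 1) * J u ^ (n + 1) = 1 := by
      rw [← zpow_natCast, ← zpow_add₀ hJu.ne']
      simp
    calc ‖(-n : ℤ) * J u ^ ((-n : ℤ) - 1) * J' u‖
        = n * J u ^ ((-n : ℤ) - 1) * |J' u| := by
          simp [abs_of_pos hJu]
      _ ≤ n * J u ^ ((-n : ℤ) - 1) * (C * J u ^ (n + 1)) := by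
          gcongr
          exact hbound u (Ico_subset_Icc_self hu)
      _ = n * C := by
          linear_combination (n * C : ℝ) * hcancel
  simpa using norm_image_sub_le_of_norm_deriv_le_segment' hderiv' hbound' b (right_mem_Icc.2 hab)

theorem le_on_Icc_of_abs_deriv_le_mul_pow {J J' : ℝ → ℝ} {a b C M : ℝ} {n : ℕ} (hn : n ≠ 0)
    (hC : 0 < C) (hM : M ≤ 1) (hpos : ∀ u ∈ Icc a b, 0 < J u)
    (hderiv : ∀ u ∈ Icc a b, HasDerivWithinAt J (J' u) (Icc a b) u)
    (hineq : ∀ u ∈ Icc a b, J u ≤ 1 → |J' u| ≤ C * J u ^ (n + 1)) (ha : J a ≤ M)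
    (htime : n * C * (b - a) ≤ (J a ^ n)⁻¹ - (M ^ n)⁻¹) {x : ℝ} (hx : x ∈ Icc a b) :
    J x ≤ M := by
  refine ContinuousOn.le_of_bootstrap (fun u hu => (hderiv u hu).continuousWithinAt) ha
    (fun y hy hJ => ?_) hx
  have hsub : Icc a y ⊆ Icc a b := Icc_subset_Icc_right hy.2.le
  have hfirst := abs_inv_pow_sub_inv_pow_le n hy.1 (fun u hu => hpos u (hsub hu))
    (fun u hu => (hderiv u (hsub hu)).mono hsub) (fun u hu => hineq u (hsub hu) ((hJ u hu).trans hM))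
  have hearly : n * C * (y - a) < n * C * (b - a) :=
    mul_lt_mul_of_pos_left (by linarith [hy.2]) (mul_pos (by positivity) hC)
  have hinv : (M ^ n)⁻¹ < (J y ^ n)⁻¹ := by linarith [(abs_le.1 hfirst).1]
  have hJy := hpos y (Ico_subset_Icc_self hy)
  have hMpos : 0 < M := hJy.trans_le (hJ y ⟨hy.1, le_rfl⟩)
  rw [inv_lt_inv₀ (by positivity) (by positivity)] at hinv
  exact (pow_lt_pow_iff_left₀ hJy.le hMpos.le hn).1 hinv

/-- If `|J'| ≤ C J^{2N+1}` whenever `J ≤ 1`, with `J(0) ≤ 1/2`, then for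
`0 ≤ t ≤ C_N / J(0)^{2N}` with `C_N = (2^{2N} - 1)/(2^{2N+1} N C)`, one has
`J(t) ≤ 2 J(0)` and `|J(t) - J(0)| ≤ 2^{2N+1} C J(0)^{2N+1} t`. -/
theorem first_integral_estimate (N : ℕ) (hN : 1 ≤ N) (C : ℝ) (hC : 0 < C)
    (J J' : ℝ → ℝ)
    (hpos : ∀ t : ℝ, 0 ≤ t → 0 < J t)
    (hderiv : ∀ t : ℝ, 0 ≤ t → HasDerivAt J (J' t) t)
    (hineq : ∀ t : ℝ, 0 ≤ t → J t ≤ 1 → |J' t| ≤ C * J t ^ (2 * N + 1))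
    (h0 : J 0 ≤ 1 / 2) (t : ℝ) (ht0 : 0 ≤ t)
    (ht : t ≤ ((2 ^ (2 * N) - 1) / (2 ^ (2 * N + 1) * N * C)) / J 0 ^ (2 * N)) :
    J t ≤ 2 * J 0 ∧ |J t - J 0| ≤ 2 ^ (2 * N + 1) * C * J 0 ^ (2 * N + 1) * t := by
  have hJ0 : 0 < J 0 := hpos 0 le_rfl
  -- `C_N / J(0)^{2N}` is the time `J^{-2N}` needs to fall from `J(0)^{-2N}` to `(2 J(0))^{-2N}`
  -- at rate `2NC`
  have htime : (2 * N : ℕ) * C * (t - 0) ≤ (J 0 ^ (2 * N))⁻¹ - ((2 * J 0) ^ (2 * N))⁻¹ := by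
    calc (2 * N : ℕ) * C * (t - 0)
        ≤ (2 * N : ℕ) * C * (((2 ^ (2 * N) - 1) / (2 ^ (2 * N + 1) * N * C)) / J 0 ^ (2 * N)) := by
          gcongr
          linarith
      _ = (J 0 ^ (2 * N))⁻¹ - ((2 * J 0) ^ (2 * N))⁻¹ := by
          push_cast
          field_simp
          ring
  have hderiv' : ∀ u ∈ Icc 0 t, HasDerivWithinAt J (J' u) (Icc 0 t) u :=
    fun u hu => (hderiv u hu.1).hasDerivWithinAt
  have hle : ∀ u ∈ Icc 0 t, J u ≤ 2 * J 0 := fun u hu =>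
    le_on_Icc_of_abs_deriv_le_mul_pow (by omega) hC (by linarith) (fun u hu => hpos u hu.1)
      hderiv' (fun u hu => hineq u hu.1) (by linarith) htime hu
  have hJ' : ∀ u ∈ Ico 0 t, ‖J' u‖ ≤ C * (2 * J 0) ^ (2 * N + 1) := fun u hu => by
    have hJu := hle u (Ico_subset_Icc_self hu)
    calc ‖J' u‖ ≤ C * J u ^ (2 * N + 1) := hineq u hu.1 (hJu.trans (by linarith))
      _ ≤ C * (2 * J 0) ^ (2 * N + 1) := by gcongr; exact (hpos u hu.1).le
  refine ⟨hle t (right_mem_Icc.2 ht0), ?_⟩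
  have hmvt := norm_image_sub_le_of_norm_deriv_le_segment' hderiv' hJ' t (right_mem_Icc.2 ht0)
  rw [Real.norm_eq_abs, sub_zero] at hmvt
  exact hmvt.trans_eq (by ring)
end
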